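/- arXiv:2605.27214 — 2 statements merged into one kernel-verified Lean document; each statement's English description precedes it below -/
import Mathlib

section
/- Let n ≥ 2 and let σ = Equiv.swap a b be a transposition of Fin n (a ≠ b). Then for every k : ℕ, twice the number of 2-cycles in the cycle decomposition of σ^{⊙k} equals multichoose n k − ∑_{ℓ=0}^{⌊k/2⌋} multichoose (n − 2) (k − 2ℓ), i.e., 2 * C_2(σ^{⊙k}) = multichoose n k − ∑_{ℓ=0}^{⌊k/2⌋} multichoose (n − 2) (k − 2ℓ). -/
/-- The `k`-th symmetric tensor power of a permutation `σ` of `Fin n`: the permutation of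
`Sym (Fin n) k` sending a multiset `m` to `Sym.map σ m`. -/
def Equiv.Perm.symPow {n : ℕ} (σ : Equiv.Perm (Fin n)) (k : ℕ) :
    Equiv.Perm (Sym (Fin n) k) :=
  (Sym.equivCongr σ : Sym (Fin n) k ≃ Sym (Fin n) k)

/-- The number of fixed points of a permutation of a finite type. -/
def fixCount {α : Type*} [Fintype α] [DecidableEq α] (τ : Equiv.Perm α) : ℕ :=
  Fintype.card {x : α // τ x = x}

/-- `cycleCount τ s` is the number of cycles of length `s` in the cycle decomposition of `τ`;
for `s = 1` this is the number of fixed points. -/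
def cycleCount {α : Type*} [Fintype α] [DecidableEq α] (τ : Equiv.Perm α) (s : ℕ) : ℕ :=
  if s = 1 then fixCount τ
  else (τ.cycleFactorsFinset.filter (fun c => c.support.card = s)).card

/-!
The transposition `σ = (a b)` is an involution, hence so is `σ^{⊙k}`, whose cycles are therefore
fixed points and 2-cycles: `2 C₂ + C₁ = multichoose n k`. A multiset is fixed by `σ^{⊙k}` iff it
contains `a` and `b` equally often, say `ℓ` times each; removing these `2ℓ` elements leaves an
arbitrary multiset of size `k - 2ℓ` over the remaining `n - 2` points, so
`C₁ = ∑ ℓ, multichoose (n - 2) (k - 2ℓ)`.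
-/

open Multiset
open scoped Finset

theorem cycleCount_eq_count_cycleType {α : Type*} [Fintype α] [DecidableEq α]
    (τ : Equiv.Perm α) {s : ℕ} (hs : s ≠ 1) : cycleCount τ s = τ.cycleType.count s := by
  rw [cycleCount, if_neg hs, Equiv.Perm.cycleType_def, Multiset.count_map, Finset.card_def,
    Finset.filter_val]
  simp only [Function.comp_apply, eq_comm]

theorem fixCount_add_sum_cycleType {α : Type*} [Fintype α] [DecidableEq α]
    (τ : Equiv.Perm α) : fixCount τ + τ.cycleType.sum = Fintype.card α := by
  have hfix : fixCount τ = Fintype.card α - τ.cycleType.sum := τ.card_fixedPoints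
  have := τ.sum_cycleType_le
  omega

theorem two_mul_cycleCount_two_add_fixCount {α : Type*} [Fintype α] [DecidableEq α]
    {τ : Equiv.Perm α} (hτ : τ ^ 2 = 1) : 2 * cycleCount τ 2 + fixCount τ = Fintype.card α := by
  have hrep := Equiv.Perm.cycleType_of_pow_prime_eq_one (p := 2) hτ
  rw [← fixCount_add_sum_cycleType τ, cycleCount_eq_count_cycleType τ (by norm_num), hrep,
    Multiset.count_replicate_self, Multiset.sum_replicate, smul_eq_mul]
  ring

section Pair

variable {α : Type*} [DecidableEq α] {a b : α}

theorem Multiset.filter_eq_or_eq (hab : a ≠ b) (m : Multiset α) :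
    m.filter (fun x => x = a ∨ x = b) = replicate (count a m) a + replicate (count b m) b := by
  ext x
  simp only [count_filter, count_add, count_replicate]
  grind

theorem Multiset.count_add_count_le_card (hab : a ≠ b) (m : Multiset α) :
    count a m + count b m ≤ card m := by
  simpa [filter_eq_or_eq hab] using card_le_card (filter_le (fun x => x = a ∨ x = b) m)

theorem Multiset.map_swap_eq_self_iff (m : Multiset α) :
    m.map (Equiv.swap a b) = m ↔ count a m = count b m := by
  constructor
  · intro h
    simpa [h] using (count_map_eq_count' (Equiv.swap a b) m (Equiv.injective _) a).symm
  · intro h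
    ext x
    conv_lhs => rw [← Equiv.swap_apply_self a b x]
    rw [count_map_eq_count' _ _ (Equiv.injective _), Equiv.swap_apply_def]
    split_ifs <;> simp_all

def Sym.addPairs (a b : α) (ℓ : ℕ) {r : ℕ} (m : Sym {x // ¬(x = a ∨ x = b)} r) :
    Sym α (r + 2 * ℓ) :=
  Sym.mk ((m : Multiset {x // ¬(x = a ∨ x = b)}).map Subtype.val + Multiset.replicate ℓ a +
    Multiset.replicate ℓ b) (by simp; ring)

theorem Sym.filter_addPairs {ℓ r : ℕ} (m : Sym {x // ¬(x = a ∨ x = b)} r) :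
    (Sym.addPairs a b ℓ m : Multiset α).filter (fun x => ¬(x = a ∨ x = b)) =
      (m : Multiset {x // ¬(x = a ∨ x = b)}).map Subtype.val := by
  rw [Sym.addPairs, Sym.coe_mk, filter_add, filter_add]
  rw [filter_eq_self.mpr, filter_eq_nil.mpr, filter_eq_nil.mpr, add_zero, add_zero]
  · exact fun x hx => by simp [eq_of_mem_replicate hx]
  · exact fun x hx => by simp [eq_of_mem_replicate hx]
  · intro x hx
    obtain ⟨y, -, rfl⟩ := mem_map.mp hx
    exact y.2

theorem Sym.addPairs_injective (ℓ : ℕ) {r : ℕ} :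
    Function.Injective (Sym.addPairs a b ℓ (r := r)) := by
  intro m m' h
  apply Sym.coe_injective
  apply Multiset.map_injective Subtype.val_injective
  rw [← Sym.filter_addPairs (ℓ := ℓ), ← Sym.filter_addPairs (ℓ := ℓ), h]

theorem Sym.count_addPairs_left (hab : a ≠ b) {ℓ r : ℕ} (m : Sym {x // ¬(x = a ∨ x = b)} r) :
    count a (Sym.addPairs a b ℓ m : Multiset α) = ℓ := by
  simp [Sym.addPairs, count_replicate, hab, Ne.symm hab]

theorem Sym.count_addPairs_right (hab : a ≠ b) {ℓ r : ℕ} (m : Sym {x // ¬(x = a ∨ x = b)} r) :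
    count b (Sym.addPairs a b ℓ m : Multiset α) = ℓ := by
  simp [Sym.addPairs, count_replicate, hab, Ne.symm hab]

theorem Sym.exists_addPairs (hab : a ≠ b) {ℓ r : ℕ} (m : Sym α (r + 2 * ℓ))
    (ha : count a (m : Multiset α) = ℓ)
    (hb : count b (m : Multiset α) = ℓ) : ∃ m', Sym.addPairs a b ℓ m' = m := by
  have hsplit := filter_add_not (fun x => x = a ∨ x = b) (m : Multiset α)
  rw [filter_eq_or_eq hab, ha, hb] at hsplit
  set m₀ := (m : Multiset α).filter (fun x => ¬(x = a ∨ x = b))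
  lift m₀ to Multiset {x // ¬(x = a ∨ x = b)} using fun x hx => (mem_filter.mp hx).2 with m'
  refine ⟨⟨m', ?_⟩, Sym.coe_injective ?_⟩
  · have hcard := congrArg card hsplit
    simp only [card_add, card_replicate, card_map, Sym.card_coe] at hcard
    omega
  · show m'.map Subtype.val + Multiset.replicate ℓ a + Multiset.replicate ℓ b = m
    rw [← hsplit]
    abel

theorem Fintype.card_subtype_not_eq_or_eq [Fintype α] (hab : a ≠ b) :
    Fintype.card {x // ¬(x = a ∨ x = b)} = Fintype.card α - 2 := by
  have hpair : (Finset.univ.filter fun x => x = a ∨ x = b) = {a, b} := by ext; simp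
  rw [Fintype.card_subtype_compl, Fintype.card_subtype, hpair, Finset.card_pair hab]

theorem Sym.card_filter_count_eq_count_eq [Fintype α] (hab : a ≠ b) {k ℓ : ℕ} (hℓ : 2 * ℓ ≤ k) :
    #{m : Sym α k | count a (m : Multiset α) = ℓ ∧ count b (m : Multiset α) = ℓ} =
      Nat.multichoose (Fintype.card α - 2) (k - 2 * ℓ) := by
  obtain ⟨r, rfl⟩ : ∃ r, k = r + 2 * ℓ := ⟨k - 2 * ℓ, by omega⟩
  rw [Nat.add_sub_cancel, ← Fintype.card_subtype_not_eq_or_eq hab,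
    ← Sym.card_sym_eq_multichoose, ← Finset.card_univ]
  symm
  refine Finset.card_bij (fun m _ => Sym.addPairs a b ℓ m) (fun m _ => ?_)
    (fun m _ m' _ h => Sym.addPairs_injective ℓ h) (fun m hm => ?_)
  · simp [Sym.count_addPairs_left hab, Sym.count_addPairs_right hab]
  · obtain ⟨ha, hb⟩ := (Finset.mem_filter.mp hm).2
    simpa using Sym.exists_addPairs hab m ha hb

end Pair

theorem Equiv.Perm.symPow_apply {n : ℕ} (σ : Equiv.Perm (Fin n)) (k : ℕ) (m : Sym (Fin n) k) :
    σ.symPow k m = Sym.map σ m :=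
  rfl

theorem Equiv.Perm.symPow_mul {n : ℕ} (σ τ : Equiv.Perm (Fin n)) (k : ℕ) :
    (σ * τ).symPow k = σ.symPow k * τ.symPow k := by
  ext m : 1
  simp [symPow_apply, Sym.map_map]

theorem Equiv.Perm.symPow_one (n k : ℕ) : (1 : Equiv.Perm (Fin n)).symPow k = 1 := by
  ext m : 1
  simp [symPow_apply]

theorem Equiv.Perm.symPow_swap_sq {n : ℕ} (a b : Fin n) (k : ℕ) :
    (Equiv.swap a b).symPow k ^ 2 = 1 := by
  rw [sq, ← symPow_mul, Equiv.swap_mul_self, symPow_one]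

theorem Equiv.Perm.symPow_swap_apply_eq_self_iff {n : ℕ} (a b : Fin n) {k : ℕ}
    (m : Sym (Fin n) k) :
    (Equiv.swap a b).symPow k m = m ↔ count a (m : Multiset (Fin n)) = count b m := by
  rw [symPow_apply, ← Sym.coe_inj, Sym.coe_map, Multiset.map_swap_eq_self_iff]

theorem fixCount_symPow_swap {n : ℕ} {a b : Fin n} (hab : a ≠ b) (k : ℕ) :
    fixCount ((Equiv.swap a b).symPow k) =
      ∑ ℓ ∈ Finset.range (k / 2 + 1), Nat.multichoose (n - 2) (k - 2 * ℓ) := by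
  have hmaps : ∀ m ∈ ({m : Sym (Fin n) k | count a (m : Multiset (Fin n)) = count b m} :
      Finset _), count a (m : Multiset (Fin n)) ∈ Finset.range (k / 2 + 1) := by
    intro m hm
    have hcount := (Finset.mem_filter.mp hm).2
    have hle := Multiset.count_add_count_le_card hab (m : Multiset (Fin n))
    rw [Sym.card_coe] at hle
    rw [Finset.mem_range]
    omega
  rw [fixCount, Fintype.card_subtype,
    Finset.filter_congr fun m _ => Equiv.Perm.symPow_swap_apply_eq_self_iff a b m,
    Finset.card_eq_sum_card_fiberwise hmaps]
  refine Finset.sum_congr rfl fun ℓ hℓ => ?_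
  have hfiber := Sym.card_filter_count_eq_count_eq hab (k := k) (ℓ := ℓ) (by grind)
  rw [Fintype.card_fin] at hfiber
  rw [Finset.filter_filter, ← hfiber]
  congr 1
  exact Finset.filter_congr fun m _ => by grind

theorem twoCycles_symPow_swap_general (n : ℕ) (a b : Fin n) (hab : a ≠ b) (k : ℕ) :
    (2 * cycleCount ((Equiv.swap a b).symPow k) 2 : ℤ) =
      (Nat.multichoose n k : ℤ) -
        ∑ ℓ ∈ Finset.range (k / 2 + 1), (Nat.multichoose (n - 2) (k - 2 * ℓ) : ℤ) := by
  have hinvol := two_mul_cycleCount_two_add_fixCount (Equiv.Perm.symPow_swap_sq a b k)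
  rw [Sym.card_sym_eq_multichoose, Fintype.card_fin, fixCount_symPow_swap hab] at hinvol
  rw [← Nat.cast_sum]
  omega

/-- The number of 2-cycles of the symmetric tensor power of a transposition. -/
theorem twoCycles_symPow_swap (n : ℕ) (hn : 2 ≤ n) (a b : Fin n) (hab : a ≠ b) (k : ℕ) :
    (2 * cycleCount ((Equiv.swap a b).symPow k) 2 : ℤ) =
      (Nat.multichoose n k : ℤ) -
        ∑ ℓ ∈ Finset.range (k / 2 + 1), (Nat.multichoose (n - 2) (k - 2 * ℓ) : ℤ) :=
  twoCycles_symPow_swap_general n a b hab k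
end

section
/- Let ℓ ≥ 2 and let σ be a permutation of Fin ℓ which is a cycle of length ℓ. Let k > 1 and let s be a positive integer such that s divides ℓ and ℓ/s divides k. Then the number C_s(σ^{⊙k}) of s-cycles in the cycle decomposition of σ^{⊙k} satisfies, as an identity of integers, (s * (ℓ + k)) * C_s(σ^{⊙k}) = ℓ * ∑_{e ∈ divisors of gcd(s, s*k/ℓ)} μ(e) * ((s + s*k/ℓ)/e).choose (s/e), where μ is the Möbius function. -/
/-!
An `s`-cycle of `τ = σ^{⊙k}` consists of `s` points of minimal period `s`, so `s * C_s(τ)`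
counts the multisets of minimal period `s`; by Möbius inversion this is
`∑_{e ∣ s} μ(e) Fix(τ^(s/e))`. A multiset is fixed by `τ^d = (σ^d)^{⊙k}` iff its multiplicity
function is constant on the orbits of `σ^d`; for `d ∣ ℓ` these are `d` orbits of length `ℓ/d`,
so `Fix(τ^d)` is the number of multisets of size `k/(ℓ/d)` on `d` letters when `ℓ/d ∣ k`, and `0`
otherwise. The identity `(r + u) * multichoose r u = r * choose (r + u) r` turns these counts into
the binomials.
-/

open Equiv Equiv.Perm Finset Function
open scoped ArithmeticFunction.Moebius

theorem Nat.add_mul_multichoose (r u : ℕ) : (r + u) * r.multichoose u = r * (r + u).choose r := by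
  rcases r with _ | r
  · cases u <;> simp
  · rw [Nat.multichoose_eq, Nat.add_right_comm, Nat.add_sub_cancel, ← Nat.choose_symm_add,
      Nat.add_one_mul_choose_eq, mul_comm]

theorem Sym.map_perm_eq_self_iff {α : Type*} [DecidableEq α] {k : ℕ} (ρ : Perm α)
    (m : Sym α k) :
    m.map ρ = m ↔ ∀ a, (m : Multiset α).count (ρ a) = (m : Multiset α).count a := by
  rw [← Sym.coe_inj, Sym.coe_map, Multiset.ext, ← ρ.forall_congr_right]
  simp only [Multiset.count_map_eq_count' _ _ ρ.injective, eq_comm]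

namespace Equiv.Perm

open MulAction Subgroup

variable {α : Type*}

theorem IsCycleOn.minimalPeriod_eq {f : Perm α} {s : Finset α} {a : α} (hf : f.IsCycleOn s)
    (ha : a ∈ s) : minimalPeriod f a = #s :=
  Nat.dvd_antisymm
    (IsPeriodicPt.minimalPeriod_dvd (by
      rw [IsPeriodicPt, IsFixedPt, ← coe_pow]; exact (hf.pow_apply_eq ha).2 dvd_rfl))
    ((hf.pow_apply_eq ha).1 (by rw [coe_pow]; exact iterate_minimalPeriod))

theorem apply_zpow_apply_eq_of_forall {β : Type*} {ρ : Perm α} {c : α → β}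
    (hc : ∀ a, c (ρ a) = c a) (n : ℤ) (a : α) : c ((ρ ^ n) a) = c a := by
  induction n using Int.induction_on with
  | zero => rfl
  | succ n ih => rw [add_comm, zpow_add, zpow_one, mul_apply, hc, ih]
  | pred n ih =>
    rw [← ih, sub_eq_neg_add, zpow_add, zpow_neg_one, mul_apply, ← hc, ← mul_apply,
      mul_inv_cancel, one_apply]

def invariantFunEquiv (ρ : Perm α) (β : Type*) :
    {c : α → β // ∀ a, c (ρ a) = c a} ≃ (orbitRel.Quotient (zpowers ρ) α → β) where
  toFun c := Quotient.lift c.1 <| by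
    rintro a b ⟨⟨g, hg⟩, rfl⟩
    obtain ⟨n, rfl⟩ := mem_zpowers_iff.1 hg
    exact apply_zpow_apply_eq_of_forall c.2 n b
  invFun f := ⟨fun a => f (Quotient.mk'' a),
    fun a => congrArg f (Quotient.sound ⟨⟨ρ, mem_zpowers ρ⟩, rfl⟩)⟩
  left_inv c := rfl
  right_inv f := funext fun ω => Quotient.inductionOn ω fun _ => rfl

variable [Fintype α]

theorem sum_comp_orbitRel_mk (ρ : Perm α) [Fintype (orbitRel.Quotient (zpowers ρ) α)] {q : ℕ}
    (hq : ∀ a, minimalPeriod ρ a = q) (f : orbitRel.Quotient (zpowers ρ) α → ℕ) :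
    ∑ a, f (Quotient.mk'' a) = q * ∑ ω, f ω := by
  classical
  rw [← sum_fiberwise univ (Quotient.mk'' : α → orbitRel.Quotient (zpowers ρ) α)
    (fun a => f (Quotient.mk'' a)), mul_sum]
  refine sum_congr rfl fun ω _ => ?_
  rw [sum_congr rfl fun a ha => congrArg f (mem_filter.1 ha).2, sum_const, smul_eq_mul]
  congr 1
  induction ω using Quotient.inductionOn with | h b => ?_
  rw [← hq b, ← Fintype.card_subtype]
  exact (Fintype.card_congr (Equiv.subtypeEquivRight fun a => Quotient.eq.trans orbitRel_apply)
    ).trans (minimalPeriod_eq_card (a := ρ) (b := b)).symm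

variable [DecidableEq α]

theorem minimalPeriod_eq_card_support_cycleOf {f : Perm α} {x : α} (hx : x ∈ f.support) :
    minimalPeriod f x = #(f.cycleOf x).support :=
  (f.isCycleOn_support_cycleOf x).minimalPeriod_eq
    (mem_support_cycleOf_iff.2 ⟨.refl _ _, hx⟩)

theorem IsCycle.minimalPeriod_eq {f : Perm α} (hf : f.IsCycle) {x : α} (hx : x ∈ f.support) :
    minimalPeriod f x = #f.support := by
  rw [minimalPeriod_eq_card_support_cycleOf hx, hf.cycleOf_eq (mem_support.1 hx)]

theorem IsCycle.minimalPeriod_pow_eq {σ : Perm α} (hc : σ.IsCycle)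
    (hs : #σ.support = Fintype.card α) {d : ℕ} (hd : d ∣ Fintype.card α) (x : α) :
    minimalPeriod (σ ^ d) x = Fintype.card α / d := by
  have hper : minimalPeriod σ x = Fintype.card α :=
    hs ▸ hc.minimalPeriod_eq (by rw [eq_univ_of_card _ hs]; exact mem_univ x)
  have hx : x ∈ periodicPts σ :=
    minimalPeriod_pos_iff_mem_periodicPts.1 (hper ▸ hs ▸ hc.nonempty_support.card_pos)
  rw [coe_pow, minimalPeriod_iterate_eq_div_gcd' hx, hper, Nat.gcd_eq_right hd]

theorem filter_minimalPeriod_eq_biUnion (f : Perm α) {s : ℕ} (hs : s ≠ 1) :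
    ({x | minimalPeriod f x = s} : Finset α) =
      {c ∈ f.cycleFactorsFinset | #c.support = s}.biUnion support := by
  ext x
  simp only [mem_filter, mem_univ, true_and, mem_biUnion]
  constructor
  · intro hx
    have hxf : x ∈ f.support := by
      by_contra h
      exact hs (hx ▸ minimalPeriod_eq_one_iff_isFixedPt.2 (notMem_support.1 h))
    exact ⟨f.cycleOf x, ⟨cycleOf_mem_cycleFactorsFinset_iff.2 hxf,
      (minimalPeriod_eq_card_support_cycleOf hxf).symm.trans hx⟩,
      mem_support_cycleOf_iff.2 ⟨.refl _ _, hxf⟩⟩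
  · rintro ⟨c, ⟨hc, rfl⟩, hxc⟩
    rw [minimalPeriod_eq_card_support_cycleOf (mem_cycleFactorsFinset_support_le hc hxc),
      ← cycle_is_cycleOf hxc hc]

theorem mul_cycleCount (f : Perm α) {s : ℕ} (hs : 0 < s) :
    s * cycleCount f s = #{x | minimalPeriod f x = s} := by
  rw [cycleCount]
  split_ifs with h
  · subst h
    simp [fixCount, Fintype.card_subtype, minimalPeriod_eq_one_iff_isFixedPt, IsFixedPt]
  · rw [filter_minimalPeriod_eq_biUnion f h, card_biUnion,
      sum_const_nat fun c hc => (mem_filter.1 hc).2, mul_comm]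
    exact fun c hc d hd hcd => disjoint_iff_disjoint_support.1
      (f.cycleFactorsFinset_pairwise_disjoint (mem_filter.1 hc).1 (mem_filter.1 hd).1 hcd)

theorem card_pow_apply_eq_self_eq_sum_divisors (f : Perm α) {n : ℕ} (hn : 0 < n) :
    #{x | (f ^ n) x = x} = ∑ i ∈ n.divisors, #{x | minimalPeriod f x = i} := by
  have hper (x : α) : (f ^ n) x = x ↔ minimalPeriod f x ∣ n := by
    rw [← isPeriodicPt_iff_minimalPeriod_dvd, IsPeriodicPt, IsFixedPt, coe_pow]
  rw [card_eq_sum_card_fiberwise (f := fun x => minimalPeriod f x) (t := n.divisors)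
    fun x hx => Nat.mem_divisors.2 ⟨(hper x).1 (mem_filter.1 hx).2, hn.ne'⟩]
  refine sum_congr rfl fun i hi => congrArg card ?_
  ext x
  simp only [mem_filter, mem_univ, true_and, and_iff_right_iff_imp]
  rintro rfl
  exact (hper x).2 (Nat.dvd_of_mem_divisors hi)

theorem card_minimalPeriod_eq_sum_moebius (f : Perm α) {n : ℕ} (hn : 0 < n) :
    (#{x | minimalPeriod f x = n} : ℤ) =
      ∑ p ∈ n.divisorsAntidiagonal, μ p.1 * (#{x | (f ^ p.2) x = x} : ℤ) := by
  have inversion := (ArithmeticFunction.sum_eq_iff_sum_mul_moebius_eq (R := ℤ)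
    (f := fun i => #{x | minimalPeriod f x = i}) (g := fun i => #{x | (f ^ i) x = x})).1
    (fun m hm => by exact_mod_cast (f.card_pow_apply_eq_self_eq_sum_divisors hm).symm) n hn
  simpa using inversion.symm

theorem card_fixed_symMap [Nonempty α] (ρ : Perm α) {q : ℕ} (hq : ∀ a, minimalPeriod ρ a = q)
    (k : ℕ) :
    #{m : Sym α k | m.map ρ = m} =
      if q ∣ k then (Fintype.card α / q).multichoose (k / q) else 0 := by
  classical
  have hq0 : 0 < q :=
    hq (Classical.arbitrary α) ▸ Nat.pos_of_ne_zero (NeZero.ne (minimalPeriod (ρ • ·) _))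
  have hsum := sum_comp_orbitRel_mk ρ hq
  have hcard : Fintype.card (orbitRel.Quotient (zpowers ρ) α) = Fintype.card α / q := by
    simpa [hq0.ne'] using (congrArg (· / q) (hsum 1)).symm
  have e : {m : Sym α k // m.map ρ = m} ≃
      {f : orbitRel.Quotient (zpowers ρ) α → ℕ // q * ∑ ω, f ω = k} :=
    ((Sym.equivNatSumOfFintype α k).subtypeEquiv fun m => Sym.map_perm_eq_self_iff ρ m).trans <|
      (Equiv.subtypeSubtypeEquivSubtypeInter _ _).trans <|
      (Equiv.subtypeEquivRight fun _ => and_comm).trans <|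
      (Equiv.subtypeSubtypeEquivSubtypeInter _ _).symm.trans <|
      (invariantFunEquiv ρ ℕ).subtypeEquiv fun c => by rw [← hsum]; rfl
  rw [← Fintype.card_subtype, ← Nat.card_eq_fintype_card, Nat.card_congr e]
  split_ifs with hqk
  · obtain ⟨j, rfl⟩ := hqk
    rw [Nat.mul_div_cancel_left j hq0, ← hcard, ← Sym.card_sym_eq_multichoose,
      ← Nat.card_eq_fintype_card]
    exact Nat.card_congr ((Equiv.subtypeEquivRight fun f => by simp [hq0.ne']).trans
      (Sym.equivNatSumOfFintype _ j).symm)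
  · have : IsEmpty {f : orbitRel.Quotient (zpowers ρ) α → ℕ // q * ∑ ω, f ω = k} :=
      ⟨fun f => hqk ⟨_, f.2.symm⟩⟩
    exact Nat.card_of_isEmpty

theorem symPow_pow {n : ℕ} (σ : Perm (Fin n)) (k d : ℕ) : σ.symPow k ^ d = (σ ^ d).symPow k := by
  induction d with
  | zero => ext m; simp [symPow]
  | succ d ih =>
    rw [pow_succ, ih, pow_succ]
    ext1 m
    exact Sym.map_map _ _ m

theorem card_fixed_symPow_pow {ℓ : ℕ} {σ : Perm (Fin ℓ)} (hc : σ.IsCycle) (hs : #σ.support = ℓ)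
    (k : ℕ) {d : ℕ} (hd : d ∣ ℓ) :
    #{m | (σ.symPow k ^ d) m = m} =
      if ℓ / d ∣ k then d.multichoose (k / (ℓ / d)) else 0 := by
  have hℓ : 0 < ℓ := hs ▸ hc.nonempty_support.card_pos
  have : Nonempty (Fin ℓ) := Fin.pos_iff_nonempty.1 hℓ
  rw [symPow_pow]
  have hper := hc.minimalPeriod_pow_eq (d := d) (by simpa using hs) (by simpa using hd)
  rw [Fintype.card_fin] at hper
  have := card_fixed_symMap (σ ^ d) hper k
  rwa [Fintype.card_fin, Nat.div_div_self hd hℓ.ne'] at this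

theorem add_mul_card_fixed_symPow_pow_div {ℓ : ℕ} {σ : Perm (Fin ℓ)} (hc : σ.IsCycle)
    (hs : #σ.support = ℓ) {s e : ℕ} (hsl : s ∣ ℓ) (hes : e ∣ s) (k' : ℕ) :
    (ℓ + ℓ / s * k') * #{m | (σ.symPow (ℓ / s * k') ^ (s / e)) m = m} =
      if e ∣ k' then ℓ * ((s + k') / e).choose (s / e) else 0 := by
  have hℓ : 0 < ℓ := hs ▸ hc.nonempty_support.card_pos
  obtain ⟨r, rfl⟩ := hes
  obtain ⟨a, rfl⟩ := hsl
  obtain ⟨⟨he, hr⟩, ha⟩ : (0 < e ∧ 0 < r) ∧ 0 < a := by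
    simpa [CanonicallyOrderedAdd.mul_pos] using hℓ
  have hdiv : e * r * a / r = a * e := by
    rw [show e * r * a = a * e * r by ring, Nat.mul_div_cancel _ hr]
  rw [Nat.mul_div_cancel_left r he, Nat.mul_div_cancel_left a (by positivity),
    card_fixed_symPow_pow hc hs _ ⟨e * a, by ring⟩, hdiv]
  by_cases hek : e ∣ k'
  · obtain ⟨u, rfl⟩ := hek
    rw [if_pos ⟨u, by ring⟩, if_pos (dvd_mul_right e u), ← mul_add, Nat.mul_div_cancel_left _ he,
      show a * (e * u) / (a * e) = u by
        rw [← mul_assoc, Nat.mul_div_cancel_left _ (by positivity)]]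
    calc (e * r * a + a * (e * u)) * r.multichoose u = a * e * ((r + u) * r.multichoose u) := by
          ring
      _ = e * r * a * (r + u).choose r := by rw [Nat.add_mul_multichoose]; ring
  · rw [if_neg fun h => hek (Nat.dvd_of_mul_dvd_mul_left ha (by simpa [mul_comm] using h)),
      if_neg hek, mul_zero]

end Equiv.Perm

theorem cycleCount_symPow_fullCycle_general (ℓ : ℕ) (hℓ : 2 ≤ ℓ) (σ : Equiv.Perm (Fin ℓ))
    (hc : σ.IsCycle) (hs : σ.support.card = ℓ) (k s : ℕ) (hs1 : 0 < s)
    (hsl : s ∣ ℓ) (hlk : ℓ / s ∣ k) :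
    ((s : ℤ) * (ℓ + k)) * (cycleCount (σ.symPow k) s : ℤ) =
      (ℓ : ℤ) * ∑ e ∈ (Nat.gcd s (s * k / ℓ)).divisors,
        (ArithmeticFunction.moebius e) * (((s + s * k / ℓ) / e).choose (s / e) : ℤ) := by
  obtain ⟨k', rfl⟩ := hlk
  have hk' : s * (ℓ / s * k') / ℓ = k' := by
    rw [← mul_assoc, Nat.mul_div_cancel' hsl, Nat.mul_div_cancel_left _ (by omega)]
  have hdivisors : (s.gcd k').divisors = {e ∈ s.divisors | e ∣ k'} := by
    rw [← Nat.divisors_filter_dvd_of_dvd hs1.ne' (Nat.gcd_dvd_left s k')]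
    exact filter_congr fun e he =>
      Nat.dvd_gcd_iff.trans (and_iff_right (Nat.dvd_of_mem_divisors he))
  rw [hk', hdivisors, sum_filter, mul_comm (s : ℤ), mul_assoc, ← Nat.cast_mul,
    mul_cycleCount _ hs1, card_minimalPeriod_eq_sum_moebius _ hs1, Nat.sum_divisorsAntidiagonal
    (fun e d => μ e * (#{m | (σ.symPow (ℓ / s * k') ^ d) m = m} : ℤ)),
    mul_sum, mul_sum]
  refine sum_congr rfl fun e he => ?_
  have term := congrArg (Nat.cast (R := ℤ))
    (add_mul_card_fixed_symPow_pow_div hc hs hsl (Nat.dvd_of_mem_divisors he) k')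
  push_cast at term ⊢
  split_ifs at term ⊢ <;> linear_combination μ e * term

/-- Möbius-inversion formula for the number of `s`-cycles of the symmetric tensor power of a
full cycle on `Fin ℓ`, in the case `s ∣ ℓ` and `ℓ/s ∣ k`. -/
theorem cycleCount_symPow_fullCycle (ℓ : ℕ) (hℓ : 2 ≤ ℓ) (σ : Equiv.Perm (Fin ℓ))
    (hc : σ.IsCycle) (hs : σ.support.card = ℓ) (k s : ℕ) (hk : 1 < k) (hs1 : 0 < s)
    (hsl : s ∣ ℓ) (hlk : ℓ / s ∣ k) :
    ((s : ℤ) * (ℓ + k)) * (cycleCount (σ.symPow k) s : ℤ) =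
      (ℓ : ℤ) * ∑ e ∈ (Nat.gcd s (s * k / ℓ)).divisors,
        (ArithmeticFunction.moebius e) * (((s + s * k / ℓ) / e).choose (s / e) : ℤ) :=
  cycleCount_symPow_fullCycle_general ℓ hℓ σ hc hs k s hs1 hsl hlk
end
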